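/- Let H_1 and H_2 be disjoint finite simple graphs with vertices v_1 ∈ V(H_1) and v_2 ∈ V(H_2). For integers i ≥ 0 and j ≥ 0, let G_{i,j} be the graph obtained from the disjoint union of H_1 and H_2 by joining v_1 to v_2 through a new path v_1 ∼ w_1 ∼ w_2 ∼ ⋯ ∼ w_{i+j+1} ∼ v_2 with i+j+1 new internal vertices, and attaching one new pendant vertex to the middle vertex w_{i+1}. Then for all λ > 2 and all i ≥ 0, j ≥ 1: φ_{G_{i,j}}(λ) − φ_{G_{i+1,j−1}}(λ) = (x_1 − x_2)·(p_{(H_1,v_1)}(λ)·q_{(H_2,v_2)}(λ)·x_2^{j−i−1} − q_{(H_1,v_1)}(λ)·p_{(H_2,v_2)}(λ)·x_1^{j−i−1}). -/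

import Mathlib

open Finset
open scoped Classical

/-- Adjacency matrix of a simple graph over `ℝ`. -/
noncomputable def adjM {V : Type*} [Fintype V] (G : SimpleGraph V) : Matrix V V ℝ :=
  fun a b => if G.Adj a b then 1 else 0

/-- Spectral radius: the largest eigenvalue of the adjacency matrix. -/
noncomputable def specRad {V : Type*} [Fintype V] (G : SimpleGraph V) : ℝ :=
  sSup {t : ℝ | ∃ f : V → ℝ, f ≠ 0 ∧ (adjM G).mulVec f = t • f}

/-- Characteristic polynomial of the adjacency matrix, as a function `φ_G(λ) = det(λI − A)`. -/
noncomputable def phi {V : Type*} [Fintype V] [DecidableEq V] (G : SimpleGraph V) (l : ℝ) : ℝ :=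
  (l • (1 : Matrix V V ℝ) - adjM G).det

/-- `G` is connected with diameter exactly `D`. -/
def hasDiam {V : Type*} (G : SimpleGraph V) (D : ℕ) : Prop :=
  G.Connected ∧ (∀ u v : V, G.dist u v ≤ D) ∧ ∃ u v : V, G.dist u v = D

/-- `G` is a minimizer graph among connected graphs on `n` vertices with diameter `D`. -/
def IsMinimizer (n D : ℕ) (G : SimpleGraph (Fin n)) : Prop :=
  hasDiam G D ∧ ∀ H : SimpleGraph (Fin n), hasDiam H D → specRad G ≤ specRad H

noncomputable def x1 (l : ℝ) : ℝ := (l - Real.sqrt (l ^ 2 - 4)) / 2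
noncomputable def x2 (l : ℝ) : ℝ := (l + Real.sqrt (l ^ 2 - 4)) / 2
noncomputable def d1f (l : ℝ) : ℝ := l - x1 l ^ 3
noncomputable def d2f (l : ℝ) : ℝ := x2 l ^ 3 - l

/-- Deletion of a vertex from a graph. -/
def delVert {V : Type*} (G : SimpleGraph V) (v : V) : SimpleGraph {u : V // u ≠ v} :=
  SimpleGraph.comap Subtype.val G

noncomputable def pfun {V : Type*} [Fintype V] [DecidableEq V] (G : SimpleGraph V) (v : V)
    (l : ℝ) : ℝ :=
  (phi (delVert G v) l - x1 l * phi G l) / (x2 l - x1 l)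

noncomputable def qfun {V : Type*} [Fintype V] [DecidableEq V] (G : SimpleGraph V) (v : V)
    (l : ℝ) : ℝ :=
  (x2 l * phi G l - phi (delVert G v) l) / (x2 l - x1 l)

/-- The graph `G_{i,j}`: join `v1 ∈ H1` to `v2 ∈ H2` by a path
`v1 ∼ w_0 ∼ w_1 ∼ ⋯ ∼ w_{i+j} ∼ v2` with `i+j+1` new internal vertices, and attach
one new pendant vertex (the `Unit` summand) to `w_i`, so that the pendant vertex's
neighbour on the path has `i` path vertices on the `H1`-side and `j` on the `H2`-side. -/
def pathJoin {V1 V2 : Type*} (H1 : SimpleGraph V1) (v1 : V1) (H2 : SimpleGraph V2) (v2 : V2)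
    (i j : ℕ) : SimpleGraph (V1 ⊕ V2 ⊕ Fin (i + j + 1) ⊕ Unit) :=
  SimpleGraph.fromRel (fun a b =>
    match a, b with
    | Sum.inl a, Sum.inl b => H1.Adj a b
    | Sum.inr (Sum.inl a), Sum.inr (Sum.inl b) => H2.Adj a b
    | Sum.inl a, Sum.inr (Sum.inr (Sum.inl w)) => a = v1 ∧ (w : ℕ) = 0
    | Sum.inr (Sum.inl a), Sum.inr (Sum.inr (Sum.inl w)) => a = v2 ∧ (w : ℕ) = i + j
    | Sum.inr (Sum.inr (Sum.inl w)), Sum.inr (Sum.inr (Sum.inl w')) => (w : ℕ) + 1 = (w' : ℕ)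
    | Sum.inr (Sum.inr (Sum.inl w)), Sum.inr (Sum.inr (Sum.inr _)) => (w : ℕ) = i
    | _, _ => False)

/-
Deleting the pendant vertex of `G_{i,j}` by Schwenk's formula `φ_G = λ φ_{G-u} - φ_{G-u-c}`
(for a leaf `u` with neighbour `c`) gives `φ_{G_{i,j}} = λ φ_B - φ_{H₁ ∘ P_i} φ_{H₂ ∘ P_j}`.
Here `B` is `H₁` and `H₂` joined by a path with `i + j + 1` internal vertices, so it depends
only on `i + j`, and `H ∘ P_k` is `H` with a pendant path of `k` vertices at `v`. Schwenk's
formula at the end of that path gives `φ_{H ∘ P_{k+2}} = λ φ_{H ∘ P_{k+1}} - φ_{H ∘ P_k}`;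
with the initial values `φ_H = p + q` and `φ_{H-v} = x₂ p + x₁ q` this solves to
`φ_{H ∘ P_k} = p x₁^k + q x₂^k`. In `φ_{G_{i,j}} - φ_{G_{i+1,j-1}}` the bridge terms and the
`pp`, `qq` terms cancel.
-/
namespace Matrix

variable {R V : Type*} [CommRing R] [Fintype V] [DecidableEq V]

theorem det_eq_mul_det_submatrix_ne_of_row (M : Matrix V V R) (u : V)
    (h : ∀ j, j ≠ u → M u j = 0) :
    M.det = M u u * (M.submatrix (Subtype.val : {x // x ≠ u} → V) Subtype.val).det := by
  refine (M.twoBlockTriangular_det' (· = u) (by rintro i rfl j hj; exact h j hj)).trans ?_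
  congr 1
  convert det_eq_elem_of_subsingleton (M.toSquareBlockProp (· = u)) ⟨u, rfl⟩ using 2
  rfl

theorem det_eq_mul_det_submatrix_ne_of_col (M : Matrix V V R) (u : V)
    (h : ∀ i, i ≠ u → M i u = 0) :
    M.det = M u u * (M.submatrix (Subtype.val : {x // x ≠ u} → V) Subtype.val).det := by
  rw [← det_transpose, det_eq_mul_det_submatrix_ne_of_row Mᵀ u h, ← transpose_submatrix,
    det_transpose, transpose_apply]

theorem det_eq_neg_mul_det_submatrix_of_row_col (M : Matrix V V R) {u c : V} (huc : u ≠ c)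
    (hrow : ∀ j, j ≠ c → M u j = 0) (hcol : ∀ i, i ≠ c → M i u = 0) :
    M.det = -(M u c * M c u) *
      (M.submatrix (Subtype.val : {x // x ≠ u ∧ x ≠ c} → V) Subtype.val).det := by
  set P := M.submatrix (Equiv.swap u c) id
  have hP : P.det = -M.det := by simp [P, det_permute, Equiv.Perm.sign_swap huc]
  set Q := P.submatrix (Subtype.val : {x // x ≠ c} → V) Subtype.val
  have hPQ : P.det = M u c * Q.det := by
    refine (det_eq_mul_det_submatrix_ne_of_row P c fun j hj => ?_).trans ?_
    · simpa [P] using hrow j hj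
    · simp [P]
      rfl
  let u' : {x // x ≠ c} := ⟨u, huc⟩
  have hQ : Q.det =
      M c u * (Q.submatrix (Subtype.val : {y // y ≠ u'} → {x // x ≠ c}) Subtype.val).det := by
    refine (det_eq_mul_det_submatrix_ne_of_col Q u' fun x hx => ?_).trans ?_
    · have hxu : x.1 ≠ u := fun h => hx (Subtype.ext h)
      simpa [Q, P, Equiv.swap_apply_of_ne_of_ne hxu x.2] using hcol x.1 x.2
    · simp [Q, P, u']
  let e : {y : {x // x ≠ c} // y ≠ u'} ≃ {x // x ≠ u ∧ x ≠ c} :=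
    { toFun := fun y => ⟨y.1.1, fun h => y.2 (Subtype.ext h), y.1.2⟩
      invFun := fun x => ⟨⟨x.1, x.2.2⟩, fun h => x.2.1 (congrArg Subtype.val h)⟩ }
  have hminor : (Q.submatrix (Subtype.val : {y // y ≠ u'} → {x // x ≠ c}) Subtype.val).det =
      (M.submatrix (Subtype.val : {x // x ≠ u ∧ x ≠ c} → V) Subtype.val).det := by
    rw [← det_submatrix_equiv_self e]
    congr 1
    ext x y
    have hxu : x.1.1 ≠ u := fun h => x.2 (Subtype.ext h)
    simp [Q, P, e, Equiv.swap_apply_of_ne_of_ne hxu x.1.2]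
  linear_combination hP - hPQ - M u c * hQ - M u c * M c u * hminor

theorem det_eq_of_row_col_support_pair (M : Matrix V V R) {u c : V} (huc : u ≠ c)
    (hrow : ∀ j, j ≠ u → j ≠ c → M u j = 0)
    (hcol : ∀ i, i ≠ u → i ≠ c → M i u = 0) :
    M.det = M u u * (M.submatrix (Subtype.val : {x // x ≠ u} → V) Subtype.val).det -
      M u c * M c u *
        (M.submatrix (Subtype.val : {x // x ≠ u ∧ x ≠ c} → V) Subtype.val).det := by
  set r := M u - Pi.single u (M u u)
  have hsplit : M.det = (M.updateRow u (Pi.single u (M u u))).det + (M.updateRow u r).det := by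
    rw [← det_updateRow_add, add_sub_cancel, updateRow_eq_self]
  have hdiag : (M.updateRow u (Pi.single u (M u u))).det =
      M u u * (M.submatrix (Subtype.val : {x // x ≠ u} → V) Subtype.val).det := by
    rw [det_eq_mul_det_submatrix_ne_of_row _ u fun j hj => by simp [hj]]
    congr 1
    · simp
    · congr 1
      ext x y
      simp [updateRow_ne x.2]
  have hoff : (M.updateRow u r).det =
      -(M u c * M c u) *
        (M.submatrix (Subtype.val : {x // x ≠ u ∧ x ≠ c} → V) Subtype.val).det := by
    rw [det_eq_neg_mul_det_submatrix_of_row_col _ huc]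
    · congr 2
      · simp [r, huc.symm]
      · ext x y
        simp [updateRow_ne x.2.1]
    · intro j hj
      by_cases hju : j = u
      · simp [r, hju]
      · simp [r, hju, hrow j hju hj]
    · intro i hi
      by_cases hiu : i = u
      · simp [r, hiu]
      · simp [updateRow_ne hiu, hcol i hiu hi]
  rw [hsplit, hdiag, hoff]
  ring

end Matrix

open SimpleGraph

@[simp] theorem SimpleGraph.ne_and_adj_or_adj_iff {V : Type*} (G : SimpleGraph V) (a b : V) :
    (a ≠ b ∧ (G.Adj a b ∨ G.Adj b a)) ↔ G.Adj a b :=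
  ⟨fun h => h.2.elim id (·.symm), fun h => ⟨h.ne, .inl h⟩⟩

theorem Fintype.card_subtype_ne_add_one {V : Type*} [Fintype V] [DecidableEq V] (u : V) :
    Fintype.card {x // x ≠ u} + 1 = Fintype.card V := by
  rw [Fintype.card_subtype, Finset.filter_ne', Finset.card_erase_add_one (Finset.mem_univ u),
    Finset.card_univ]

theorem Fintype.card_subtype_ne_and_ne_add_two {V : Type*} [Fintype V] [DecidableEq V] {u c : V}
    (huc : u ≠ c) : Fintype.card {x // x ≠ u ∧ x ≠ c} + 2 = Fintype.card V := by
  rw [Fintype.card_subtype]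
  simp only [← Finset.filter_filter, Finset.filter_ne']
  rw [← Finset.card_univ, ← Finset.card_erase_add_one (Finset.mem_univ u),
    ← Finset.card_erase_add_one (Finset.mem_erase.2 ⟨huc.symm, Finset.mem_univ c⟩)]

section CharPoly

variable {V W : Type*} [Fintype V] [DecidableEq V] [Fintype W] [DecidableEq W]

theorem submatrix_sub_adjM (G : SimpleGraph V) {f : W → V} (hf : Function.Injective f) (l : ℝ) :
    (l • (1 : Matrix V V ℝ) - adjM G).submatrix f f = l • 1 - adjM (G.comap f) := by
  ext x y
  simp [adjM, Matrix.one_apply, hf.eq_iff]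

theorem phi_comap_equiv (G : SimpleGraph V) (e : W ≃ V) (l : ℝ) :
    phi (G.comap e) l = phi G l := by
  rw [phi, phi, ← submatrix_sub_adjM G e.injective, Matrix.det_submatrix_equiv_self]

theorem phi_comap_eq_of_card_eq (G : SimpleGraph V) (p : V → Prop) [DecidablePred p]
    {f : W → V} (hf : Function.Injective f) (hp : ∀ w, p (f w))
    (hcard : Fintype.card W = Fintype.card {x // p x}) (l : ℝ) :
    phi (G.comap f) l = phi (G.comap (Subtype.val : {x // p x} → V)) l := by
  let f' : W → {x // p x} := fun w => ⟨f w, hp w⟩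
  have hf' : f'.Bijective := (Fintype.bijective_iff_injective_and_card f').2
    ⟨fun a b h => hf (congrArg Subtype.val h), hcard⟩
  exact phi_comap_equiv (G.comap Subtype.val) (Equiv.ofBijective f' hf') l

theorem phi_eq_sub_of_pendant (G : SimpleGraph V) {u c : V} (hadj : G.Adj u c)
    (hleaf : ∀ x, G.Adj u x → x = c) (l : ℝ) :
    phi G l = l * phi (delVert G u) l -
      phi (G.comap (Subtype.val : {x // x ≠ u ∧ x ≠ c} → V)) l := by
  have huc := hadj.ne
  have hdet := Matrix.det_eq_of_row_col_support_pair (l • (1 : Matrix V V ℝ) - adjM G) huc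
    (fun j hju hjc => by simp [adjM, hju.symm, mt (hleaf j) hjc])
    (fun i hiu hic => by simp [adjM, hiu, G.adj_comm i u, mt (hleaf i) hic])
  rw [phi, hdet, submatrix_sub_adjM G Subtype.val_injective,
    submatrix_sub_adjM G Subtype.val_injective]
  simp [adjM, huc, huc.symm, hadj, hadj.symm, phi, delVert]

theorem phi_eq_sub_comap_of_pendant {W' : Type*} [Fintype W'] [DecidableEq W']
    (G : SimpleGraph V) {u c : V} (hadj : G.Adj u c) (hleaf : ∀ x, G.Adj u x → x = c)
    {f : W → V} (hf : Function.Injective f) (hfu : ∀ w, f w ≠ u)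
    (hW : Fintype.card W + 1 = Fintype.card V)
    {g : W' → V} (hg : Function.Injective g) (hgu : ∀ w, g w ≠ u) (hgc : ∀ w, g w ≠ c)
    (hW' : Fintype.card W' + 2 = Fintype.card V) (l : ℝ) :
    phi G l = l * phi (G.comap f) l - phi (G.comap g) l := by
  rw [phi_eq_sub_of_pendant G hadj hleaf l, delVert,
    phi_comap_eq_of_card_eq G (· ≠ u) hf hfu
      (by have := Fintype.card_subtype_ne_add_one u; omega),
    phi_comap_eq_of_card_eq G (fun x => x ≠ u ∧ x ≠ c) hg (fun w => ⟨hgu w, hgc w⟩)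
      (by have := Fintype.card_subtype_ne_and_ne_add_two hadj.ne; omega)]

theorem phi_sum (G : SimpleGraph V) (H : SimpleGraph W) (l : ℝ) :
    phi (G ⊕g H) l = phi G l * phi H l := by
  have hblocks : l • (1 : Matrix (V ⊕ W) (V ⊕ W) ℝ) - adjM (G ⊕g H) =
      Matrix.fromBlocks (l • 1 - adjM G) 0 0 (l • 1 - adjM H) := by
    ext (a | b) (a' | b') <;> simp [adjM, Matrix.one_apply]
  rw [phi, hblocks, Matrix.det_fromBlocks_zero₂₁, phi, phi]

end CharPoly

section Roots

variable {l : ℝ}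

theorem x1_add_x2 (l : ℝ) : x1 l + x2 l = l := by
  unfold x1 x2
  ring

theorem x2_sub_x1_pos (hl : 4 < l ^ 2) : 0 < x2 l - x1 l := by
  have : x2 l - x1 l = √(l ^ 2 - 4) := by
    unfold x1 x2
    ring
  rw [this, Real.sqrt_pos]
  linarith

theorem x1_mul_x2 (hl : 4 ≤ l ^ 2) : x1 l * x2 l = 1 := by
  have hsq : √(l ^ 2 - 4) ^ 2 = l ^ 2 - 4 := Real.sq_sqrt (by linarith)
  unfold x1 x2
  linear_combination -hsq / 4

theorem x1_sq (hl : 4 ≤ l ^ 2) : x1 l ^ 2 = l * x1 l - 1 := by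
  linear_combination x1 l * x1_add_x2 l - x1_mul_x2 hl

theorem x2_sq (hl : 4 ≤ l ^ 2) : x2 l ^ 2 = l * x2 l - 1 := by
  linear_combination x2 l * x1_add_x2 l - x1_mul_x2 hl

theorem zpow_natCast_sub_natCast_of_mul_eq_one {K : Type*} [Field K] {a b : K} (hab : a * b = 1)
    (m n : ℕ) : a ^ ((m : ℤ) - n) = a ^ m * b ^ n := by
  rw [zpow_sub₀ (left_ne_zero_of_mul_eq_one hab), zpow_natCast, zpow_natCast, div_eq_mul_inv,
    ← inv_pow, inv_eq_of_mul_eq_one_right hab]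

variable {V : Type*} [Fintype V] [DecidableEq V] (G : SimpleGraph V) (v : V)

theorem pfun_add_qfun (hl : 4 < l ^ 2) : pfun G v l + qfun G v l = phi G l := by
  have := (x2_sub_x1_pos hl).ne'
  unfold pfun qfun
  field_simp
  ring

theorem x2_mul_pfun_add_x1_mul_qfun (hl : 4 < l ^ 2) :
    x2 l * pfun G v l + x1 l * qfun G v l = phi (delVert G v) l := by
  have := (x2_sub_x1_pos hl).ne'
  unfold pfun qfun
  field_simp
  ring

end Roots

def attachPath {V : Type*} (H : SimpleGraph V) (v : V) (k : ℕ) : SimpleGraph (V ⊕ Fin k) :=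
  SimpleGraph.fromRel (fun a b =>
    match a, b with
    | .inl a, .inl b => H.Adj a b
    | .inl a, .inr w => a = v ∧ (w : ℕ) = 0
    | .inr w, .inr w' => (w : ℕ) + 1 = w'
    | _, _ => False)

def bridgeJoin {V1 V2 : Type*} (H1 : SimpleGraph V1) (v1 : V1) (H2 : SimpleGraph V2) (v2 : V2)
    (s : ℕ) : SimpleGraph (V1 ⊕ V2 ⊕ Fin (s + 1)) :=
  SimpleGraph.fromRel (fun a b =>
    match a, b with
    | .inl a, .inl b => H1.Adj a b
    | .inr (.inl a), .inr (.inl b) => H2.Adj a b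
    | .inl a, .inr (.inr w) => a = v1 ∧ (w : ℕ) = 0
    | .inr (.inl a), .inr (.inr w) => a = v2 ∧ (w : ℕ) = s
    | .inr (.inr w), .inr (.inr w') => (w : ℕ) + 1 = w'
    | _, _ => False)

section AttachPath

variable {V : Type*} (H : SimpleGraph V) (v : V)

theorem attachPath_zero : attachPath H v 0 = H.comap (Equiv.sumEmpty V (Fin 0)) := by
  ext (a | ⟨_, ⟨⟩⟩) (b | ⟨_, ⟨⟩⟩)
  simp [attachPath]

variable [Fintype V] [DecidableEq V]

theorem phi_attachPath_one (l : ℝ) :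
    phi (attachPath H v 1) l = l * phi H l - phi (delVert H v) l := by
  have hH : (attachPath H v 1).comap Sum.inl = H := by
    ext a b
    simp [attachPath]
  have hdel : (attachPath H v 1).comap (fun x : {x // x ≠ v} => .inl x.1) = delVert H v := by
    ext a b
    simp [attachPath, delVert]
  refine (phi_eq_sub_comap_of_pendant _ (u := .inr 0) (c := .inl v) (f := Sum.inl)
    (g := fun x : {x // x ≠ v} => .inl x.1) (by simp [attachPath]) ?_ Sum.inl_injective
    (by simp) (by simp) ?_ (by simp) (by simp) ?_ l).trans (by rw [hH, hdel])
  · rintro (a | w) h <;> simp_all [attachPath, Fin.fin_one_eq_zero]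
  · intro a b hab
    exact Subtype.ext (Sum.inl_injective hab)
  · simp only [Fintype.card_sum, Fintype.card_fin]
    have := Fintype.card_subtype_ne_add_one v
    omega

theorem phi_attachPath_add_two (k : ℕ) (l : ℝ) :
    phi (attachPath H v (k + 2)) l =
      l * phi (attachPath H v (k + 1)) l - phi (attachPath H v k) l := by
  have h1 :
      (attachPath H v (k + 2)).comap (Sum.map id Fin.castSucc) = attachPath H v (k + 1) := by
    -- `Fin.val_eq_zero_iff` would turn the conditions `(w : ℕ) = 0` into `Fin` equations, which
    -- then loop with `Fin.ext_iff` and are out of `omega`'s reach.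
    ext (a | w) (b | w') <;> simp [attachPath, -Fin.val_eq_zero_iff]
  have h0 : (attachPath H v (k + 2)).comap (Sum.map id (Fin.castLE (Nat.le_add_right k 2))) =
      attachPath H v k := by
    ext (a | w) (b | w') <;> simp [attachPath, -Fin.val_eq_zero_iff]
  refine (phi_eq_sub_comap_of_pendant _ (u := .inr (Fin.last (k + 1)))
    (c := .inr (Fin.castSucc (Fin.last k))) (f := Sum.map id Fin.castSucc)
    (g := Sum.map id (Fin.castLE (Nat.le_add_right k 2)))
    (by simp [attachPath, Fin.ext_iff, -Fin.val_eq_zero_iff]) ?_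
    (Sum.map_injective.2 ⟨Function.injective_id, Fin.castSucc_injective _⟩) ?_ (by simp; ring)
    (Sum.map_injective.2 ⟨Function.injective_id, Fin.castLE_injective _⟩) ?_ ?_ (by simp; ring)
    l).trans (by rw [h1, h0])
  · rintro (a | w) h <;> simp [attachPath, -Fin.val_eq_zero_iff, Fin.ext_iff] at h ⊢
    omega
  all_goals rintro (a | w) <;> simp [Fin.ext_iff]; omega

theorem phi_attachPath {l : ℝ} (hl : 4 < l ^ 2) (k : ℕ) :
    phi (attachPath H v k) l = pfun H v l * x1 l ^ k + qfun H v l * x2 l ^ k := by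
  induction k using Nat.twoStepInduction with
  | zero => simp [attachPath_zero, phi_comap_equiv, pfun_add_qfun H v hl]
  | one =>
    rw [phi_attachPath_one, ← x2_mul_pfun_add_x1_mul_qfun H v hl, ← pfun_add_qfun H v hl]
    linear_combination -(pfun H v l + qfun H v l) * x1_add_x2 l
  | more k ih1 ih2 =>
    rw [phi_attachPath_add_two, ih1, ih2]
    linear_combination -pfun H v l * x1 l ^ k * x1_sq hl.le - qfun H v l * x2 l ^ k * x2_sq hl.le

end AttachPath

section PathJoin

variable {V1 V2 : Type*} (H1 : SimpleGraph V1) (v1 : V1) (H2 : SimpleGraph V2) (v2 : V2)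

-- The path at `v2` is numbered from `v2` in `attachPath H2 v2 j`, hence `i + j - w`.
def pathJoinSplit (i j : ℕ) :
    (V1 ⊕ Fin i) ⊕ (V2 ⊕ Fin j) → V1 ⊕ V2 ⊕ Fin (i + j + 1) ⊕ Unit
  | .inl (.inl a) => .inl a
  | .inl (.inr w) => .inr (.inr (.inl ⟨w, by omega⟩))
  | .inr (.inl b) => .inr (.inl b)
  | .inr (.inr w) => .inr (.inr (.inl ⟨i + j - w, by omega⟩))

theorem pathJoin_comap_pathJoinSplit (i j : ℕ) :
    (pathJoin H1 v1 H2 v2 i j).comap (pathJoinSplit i j) =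
      attachPath H1 v1 i ⊕g attachPath H2 v2 j := by
  ext ((a | w) | (b | w)) ((a' | w') | (b' | w')) <;>
    simp [pathJoin, pathJoinSplit, attachPath, Fin.ext_iff, -Fin.val_eq_zero_iff] <;> omega

theorem pathJoin_comap_inl (i j : ℕ) :
    (pathJoin H1 v1 H2 v2 i j).comap (Sum.map id (Sum.map id Sum.inl)) =
      bridgeJoin H1 v1 H2 v2 (i + j) := by
  ext (a | b | w) (a' | b' | w') <;> simp [pathJoin, bridgeJoin]

variable [Fintype V1] [DecidableEq V1] [Fintype V2] [DecidableEq V2]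

theorem phi_pathJoin (i j : ℕ) (l : ℝ) :
    phi (pathJoin H1 v1 H2 v2 i j) l = l * phi (bridgeJoin H1 v1 H2 v2 (i + j)) l -
      phi (attachPath H1 v1 i) l * phi (attachPath H2 v2 j) l := by
  rw [← phi_sum, ← pathJoin_comap_inl, ← pathJoin_comap_pathJoinSplit]
  refine phi_eq_sub_comap_of_pendant _ (u := .inr (.inr (.inr ())))
    (c := .inr (.inr (.inl ⟨i, by omega⟩))) (by simp [pathJoin]) ?_
    (Sum.map_injective.2 ⟨Function.injective_id,
      Sum.map_injective.2 ⟨Function.injective_id, Sum.inl_injective⟩⟩)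
    (by simp) (by simp; ring) ?_ ?_ ?_ ?_ l
  · rintro (a | b | w | t) h <;> simp [pathJoin, Fin.ext_iff, -Fin.val_eq_zero_iff] at h ⊢
    exact h
  · rintro ((a | w) | (b | w)) ((a' | w') | (b' | w')) h <;>
      simp [pathJoinSplit, Fin.ext_iff] at h ⊢ <;> omega
  · rintro ((a | w) | (b | w)) <;> simp [pathJoinSplit]
  · rintro ((a | w) | (b | w)) <;> simp [pathJoinSplit, Fin.ext_iff] <;> omega
  · simp
    ring

end PathJoin

/-- Lemma 2.8: the difference of characteristic polynomials of `G_{i,j}` and `G_{i+1,j-1}`. -/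
theorem phi_pathJoin_diff {V1 V2 : Type*}
    [Fintype V1] [DecidableEq V1] [Fintype V2] [DecidableEq V2]
    (H1 : SimpleGraph V1) (v1 : V1) (H2 : SimpleGraph V2) (v2 : V2)
    (i j : ℕ) (hj : 1 ≤ j) (l : ℝ) (hl : 2 < l) :
    phi (pathJoin H1 v1 H2 v2 i j) l - phi (pathJoin H1 v1 H2 v2 (i + 1) (j - 1)) l =
      (x1 l - x2 l) *
        (pfun H1 v1 l * qfun H2 v2 l * x2 l ^ ((j : ℤ) - (i : ℤ) - 1) -
         qfun H1 v1 l * pfun H2 v2 l * x1 l ^ ((j : ℤ) - (i : ℤ) - 1)) := by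
  obtain ⟨k, rfl⟩ : ∃ k, j = k + 1 := ⟨j - 1, by omega⟩
  have hl2 : 4 < l ^ 2 := by nlinarith
  have hexp : ((k + 1 : ℕ) : ℤ) - i - 1 = (k : ℤ) - i := by push_cast; ring
  rw [Nat.add_sub_cancel, phi_pathJoin, phi_pathJoin, show i + 1 + k = i + (k + 1) by omega, hexp,
    zpow_natCast_sub_natCast_of_mul_eq_one ((mul_comm _ _).trans (x1_mul_x2 hl2.le)),
    zpow_natCast_sub_natCast_of_mul_eq_one (x1_mul_x2 hl2.le)]
  simp only [phi_attachPath _ _ hl2]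
  ring
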